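/- Let v1 = (1, 0), v2 = (0, 1), v3 = (√2/2, √2/2) in ℝ^2. There is no unit vector ξ ∈ ℝ^2 such that ⟨ξ, vi⟩^2 = ⟨ξ, vj⟩^2 for all i, j ∈ {1, 2, 3}. -/

import Mathlib

/-! Equal weights on `e1`, `e2` force `ξ = (±1, ±1)/√2`, and then `⟨ξ, v3⟩²` is `0` or `1`,
never `1/2`. -/

open scoped RealInnerProductSpace

/-- The three directions `v1 = e1`, `v2 = e2`, `v3 = (√2/2, √2/2)` in `ℝ²`. -/
noncomputable def dirs2 : Fin 3 → EuclideanSpace ℝ (Fin 2) :=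
  ![(WithLp.equiv 2 (Fin 2 → ℝ)).symm ![1, 0],
    (WithLp.equiv 2 (Fin 2 → ℝ)).symm ![0, 1],
    (WithLp.equiv 2 (Fin 2 → ℝ)).symm ![Real.sqrt 2 / 2, Real.sqrt 2 / 2]]

lemma EuclideanSpace.sq_add_sq_eq_one_of_norm_eq_one {ξ : EuclideanSpace ℝ (Fin 2)}
    (hξ : ‖ξ‖ = 1) : ξ 0 ^ 2 + ξ 1 ^ 2 = 1 := by
  have h := EuclideanSpace.norm_sq_eq ξ
  simpa [hξ, Fin.sum_univ_two, eq_comm] using h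

lemma inner_dirs2_zero (ξ : EuclideanSpace ℝ (Fin 2)) : ⟪ξ, dirs2 0⟫ = ξ 0 := by
  simp [dirs2, PiLp.inner_apply, Fin.sum_univ_two]

lemma inner_dirs2_one (ξ : EuclideanSpace ℝ (Fin 2)) : ⟪ξ, dirs2 1⟫ = ξ 1 := by
  simp [dirs2, PiLp.inner_apply, Fin.sum_univ_two]

lemma inner_dirs2_two_sq (ξ : EuclideanSpace ℝ (Fin 2)) :
    ⟪ξ, dirs2 2⟫ ^ 2 = (ξ 0 + ξ 1) ^ 2 / 2 := by
  simp only [dirs2, PiLp.inner_apply, Fin.sum_univ_two, Matrix.cons_val_two, Matrix.tail_cons,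
    Matrix.head_cons, WithLp.equiv_symm_apply, Matrix.cons_val_zero,
    Matrix.cons_val_one, RCLike.inner_apply, conj_trivial]
  have hsqrt : Real.sqrt 2 ^ 2 = 2 := Real.sq_sqrt zero_le_two
  linear_combination (ξ 0 + ξ 1) ^ 2 / 4 * hsqrt

lemma half_sq_add_ne_sq_of_sq_eq {a b : ℝ} (hab : a ^ 2 + b ^ 2 = 1) (h : a ^ 2 = b ^ 2) :
    (a + b) ^ 2 / 2 ≠ a ^ 2 := by
  intro h'
  have ha : a ^ 2 = 1 / 2 := by linarith
  have hb : b ^ 2 = 1 / 2 := by linarith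
  have hprod : a * b = 0 := by linear_combination h' + h / 2
  have : (a * b) ^ 2 = 1 / 4 := by rw [mul_pow, ha, hb]; norm_num
  rw [hprod] at this
  norm_num at this

/-- In dimension `2`, there is no unit vector `ξ` with `⟨ξ, v_i⟩² = ⟨ξ, v_j⟩²`
for all pairs among `v1 = e1`, `v2 = e2`, `v3 = (√2/2, √2/2)`. -/
theorem stmt5 :
    ¬ ∃ ξ : EuclideanSpace ℝ (Fin 2), ‖ξ‖ = 1 ∧
        ∀ i j : Fin 3, ⟪ξ, dirs2 i⟫ ^ 2 = ⟪ξ, dirs2 j⟫ ^ 2 := by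
  rintro ⟨ξ, hξ, h⟩
  have h01 := h 0 1
  have h20 := h 2 0
  rw [inner_dirs2_zero, inner_dirs2_one] at h01
  rw [inner_dirs2_two_sq, inner_dirs2_zero] at h20
  exact half_sq_add_ne_sq_of_sq_eq (EuclideanSpace.sq_add_sq_eq_one_of_norm_eq_one hξ) h01 h20
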